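/- For every integer n and every complex number z with Re(z) > 0, the Abramowitz functions satisfy the recurrence relation 2·J_n(z) = (n−1)·J_{n−2}(z) + z·J_{n−3}(z). -/

import Mathlib

/-!
Integration by parts: `t ↦ t^(n-1) e^(-t² - z/t)` has derivative
`((n-1) t^(n-2) - 2 t^n + z t^(n-3)) e^(-t² - z/t)` on `(0, ∞)`, and since `Re z > 0` it vanishes
at both ends, so the integral of the derivative is zero. Integrability and the limit at `0⁺` both
follow from `t^k e^(-c/t) ≤ |k|!/c^|k| + t^|k|` for `c, t > 0`.
-/

open MeasureTheory

/-- The Abramowitz function `J_n`. -/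
noncomputable def abramowitzJ (n : ℤ) (z : ℂ) : ℂ :=
  ∫ t in Set.Ioi (0 : ℝ), ((t ^ n : ℝ) : ℂ) * Complex.exp (-(t : ℂ) ^ 2 - z / (t : ℂ))

open Real Filter Set Topology Nat

theorem integral_Ioi_eq_zero_of_hasDerivAt_of_tendsto {E : Type*} [NormedAddCommGroup E]
    [NormedSpace ℝ E] [CompleteSpace E] {f f' : ℝ → E} {a : ℝ}
    (hderiv : ∀ x ∈ Ioi a, HasDerivAt f (f' x) x) (hf'int : IntegrableOn f' (Ioi a))
    (hfint : IntegrableOn f (Ioi a)) (hfa : Tendsto f (𝓝[>] a) (𝓝 0)) :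
    ∫ x in Ioi a, f' x = 0 := by
  classical
  -- `f a` enters neither side; redefining it as `0` makes `f` continuous on `[a, ∞)`.
  have hupdate : ∀ x ∈ Ioi a, Function.update f a 0 =ᶠ[𝓝 x] f := fun x hx => by
    filter_upwards [eventually_ne_nhds (ne_of_gt hx)] with y hy
    exact Function.update_of_ne hy _ _
  have hcont : ContinuousWithinAt (Function.update f a 0) (Ici a) a := by
    rwa [continuousWithinAt_update_same, Ici_sdiff_left]
  have htop : Tendsto (Function.update f a 0) atTop (𝓝 0) :=
    (tendsto_zero_of_hasDerivAt_of_integrableOn_Ioi hderiv hf'int hfint).congr'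
      (eventually_gt_atTop a |>.mono fun x hx => (Function.update_of_ne (ne_of_gt hx) _ _).symm)
  simpa only [Function.update_self, sub_self] using integral_Ioi_of_hasDerivAt_of_tendsto hcont
    (fun x hx => (hderiv x hx).congr_of_eventuallyEq (hupdate x hx)) hf'int htop

theorem pow_mul_exp_neg_le_factorial {x : ℝ} (hx : 0 ≤ x) (m : ℕ) :
    x ^ m * exp (-x) ≤ m ! := by
  rw [exp_neg, ← div_eq_mul_inv, div_le_iff₀ (exp_pos x), ← div_le_iff₀' (by positivity)]
  exact pow_div_factorial_le_exp _ hx m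

theorem zpow_mul_exp_neg_div_le {c t : ℝ} (hc : 0 < c) (ht : 0 < t) (k : ℤ) :
    t ^ k * exp (-(c / t)) ≤ k.natAbs ! / c ^ k.natAbs + t ^ k.natAbs := by
  set m := k.natAbs
  rcases le_total 1 t with h1 | h1
  · have hk : t ^ k ≤ t ^ m := by
      simpa only [zpow_natCast] using zpow_le_zpow_right₀ h1 (show k ≤ m by omega)
    have he : exp (-(c / t)) ≤ 1 := exp_le_one_iff.2 (by have := div_pos hc ht; linarith)
    calc t ^ k * exp (-(c / t)) ≤ t ^ m * 1 := by gcongr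
      _ ≤ _ := by rw [mul_one]; exact le_add_of_nonneg_left (by positivity)
  · have hk : t ^ k ≤ (c / t) ^ m / c ^ m := by
      rw [div_pow, div_div_cancel_left' (by positivity), ← inv_pow, ← zpow_natCast, inv_zpow']
      exact zpow_le_zpow_right_of_le_one₀ ht h1 (by omega)
    calc t ^ k * exp (-(c / t)) ≤ (c / t) ^ m / c ^ m * exp (-(c / t)) := by gcongr
      _ = (c / t) ^ m * exp (-(c / t)) / c ^ m := by ring
      _ ≤ m ! / c ^ m := by gcongr; exact pow_mul_exp_neg_le_factorial (by positivity) m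
      _ ≤ _ := le_add_of_nonneg_right (by positivity)

noncomputable def abramowitzIntegrand (n : ℤ) (z : ℂ) (t : ℝ) : ℂ :=
  ((t ^ n : ℝ) : ℂ) * Complex.exp (-(t : ℂ) ^ 2 - z / (t : ℂ))

theorem hasDerivAt_abramowitzIntegrand (n : ℤ) (z : ℂ) {t : ℝ} (ht : t ≠ 0) :
    HasDerivAt (abramowitzIntegrand n z)
      (n * abramowitzIntegrand (n - 1) z t - 2 * abramowitzIntegrand (n + 1) z t
        + z * abramowitzIntegrand (n - 2) z t) t := by
  have htc : (t : ℂ) ≠ 0 := Complex.ofReal_ne_zero.2 ht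
  have hfun : abramowitzIntegrand n z =
      (fun w : ℂ => w ^ n * Complex.exp (-w ^ 2 - z * w⁻¹)) ∘ ((↑) : ℝ → ℂ) := by
    ext s; simp [abramowitzIntegrand, Complex.ofReal_zpow, div_eq_mul_inv]
  rw [hfun]
  refine (((hasDerivAt_zpow n _ (Or.inl htc)).mul ((hasDerivAt_pow 2 _).neg.sub
    ((hasDerivAt_inv htc).const_mul z)).cexp).comp_ofReal).congr_deriv ?_
  simp only [abramowitzIntegrand, Complex.ofReal_zpow, Pi.neg_apply, Pi.sub_apply,
    zpow_add_one₀ htc, zpow_sub₀ htc]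
  field_simp
  ring

theorem norm_abramowitzIntegrand (n : ℤ) (z : ℂ) {t : ℝ} (ht : 0 < t) :
    ‖abramowitzIntegrand n z t‖ = t ^ n * exp (-(z.re / t)) * exp (-t ^ 2) := by
  rw [abramowitzIntegrand, norm_mul, Complex.norm_exp, Complex.norm_real, norm_of_nonneg
    (zpow_nonneg ht.le n), mul_assoc, ← Real.exp_add]
  congr 2
  simp only [pow_two, Complex.sub_re, Complex.neg_re, Complex.mul_re, Complex.ofReal_re,
    Complex.ofReal_im, mul_zero, sub_zero, Complex.div_ofReal_re]
  ring

theorem norm_abramowitzIntegrand_le {z : ℂ} (hz : 0 < z.re) (n : ℤ) {t : ℝ} (ht : 0 < t) :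
    ‖abramowitzIntegrand n z t‖ ≤
      (n.natAbs ! / z.re ^ n.natAbs + t ^ n.natAbs) * exp (-t ^ 2) := by
  rw [norm_abramowitzIntegrand n z ht]
  gcongr
  exact zpow_mul_exp_neg_div_le hz ht n

theorem integrableOn_abramowitzIntegrand {z : ℂ} (hz : 0 < z.re) (n : ℤ) :
    IntegrableOn (abramowitzIntegrand n z) (Ioi 0) := by
  set m := n.natAbs
  have hdom : IntegrableOn (fun t : ℝ => (m ! / z.re ^ m + t ^ m) * exp (-t ^ 2)) (Ioi 0) := by
    have hgauss := integrableOn_rpow_mul_exp_neg_mul_sq one_pos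
      (neg_one_lt_zero.trans_le m.cast_nonneg)
    have hexp := integrable_exp_neg_mul_sq one_pos
    simp only [rpow_natCast, neg_one_mul] at hgauss hexp
    rw [IntegrableOn]
    simpa only [add_mul] using (hexp.integrableOn.const_mul (m ! / z.re ^ m)).fun_add hgauss
  refine hdom.mono' ?_ ?_
  · exact ContinuousOn.aestronglyMeasurable (fun t ht =>
      (hasDerivAt_abramowitzIntegrand n z (ne_of_gt ht)).continuousAt.continuousWithinAt)
      measurableSet_Ioi
  · exact (ae_restrict_mem measurableSet_Ioi).mono fun t ht => norm_abramowitzIntegrand_le hz n ht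

theorem tendsto_abramowitzIntegrand_nhdsGT_zero {z : ℂ} (hz : 0 < z.re) (n : ℤ) :
    Tendsto (abramowitzIntegrand n z) (𝓝[>] 0) (𝓝 0) := by
  -- The integrand of order `n` is `t` times that of order `n - 1`, whose bound is finite at `0`.
  set m := (n - 1).natAbs
  have hbound : Tendsto (fun t : ℝ => t * ((m ! / z.re ^ m + t ^ m) * exp (-t ^ 2)))
      (𝓝[>] 0) (𝓝 0) :=
    ((Continuous.tendsto' (by fun_prop) 0 0 (by simp)).mono_left nhdsWithin_le_nhds)
  refine squeeze_zero_norm' ?_ hbound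
  filter_upwards [self_mem_nhdsWithin] with t (ht : 0 < t)
  have hshift : abramowitzIntegrand n z t = t * abramowitzIntegrand (n - 1) z t := by
    have htc : (t : ℂ) ≠ 0 := Complex.ofReal_ne_zero.2 ht.ne'
    simp only [abramowitzIntegrand, Complex.ofReal_zpow]
    rw [zpow_sub_one₀ htc]
    field_simp
  rw [hshift, norm_mul, Complex.norm_of_nonneg ht.le]
  gcongr
  exact norm_abramowitzIntegrand_le hz (n - 1) ht

theorem abramowitzJ_eq_integral (n : ℤ) (z : ℂ) :
    abramowitzJ n z = ∫ t in Ioi 0, abramowitzIntegrand n z t :=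
  rfl

theorem abramowitzJ_recurrence (n : ℤ) (z : ℂ) (hz : 0 < z.re) :
    2 * abramowitzJ n z = ((n : ℂ) - 1) * abramowitzJ (n - 2) z + z * abramowitzJ (n - 3) z := by
  have hint (k : ℤ) (c : ℂ) : IntegrableOn (fun t => c * abramowitzIntegrand k z t) (Ioi 0) :=
    (integrableOn_abramowitzIntegrand hz k).const_mul c
  have hsub : IntegrableOn (fun t => ((n : ℂ) - 1) * abramowitzIntegrand (n - 2) z t
      - 2 * abramowitzIntegrand n z t) (Ioi 0) :=
    (hint _ _).sub (hint _ _)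
  have hderiv : ∀ t ∈ Ioi (0 : ℝ), HasDerivAt (abramowitzIntegrand (n - 1) z)
      (((n : ℂ) - 1) * abramowitzIntegrand (n - 2) z t - 2 * abramowitzIntegrand n z t
        + z * abramowitzIntegrand (n - 3) z t) t := fun t ht => by
    simpa only [Int.cast_sub, Int.cast_one, sub_add_cancel, show n - 1 - 1 = n - 2 by ring,
      show n - 1 - 2 = n - 3 by ring] using
      hasDerivAt_abramowitzIntegrand (n - 1) z (ne_of_gt ht)
  have hzero := integral_Ioi_eq_zero_of_hasDerivAt_of_tendsto hderiv (hsub.fun_add (hint _ _))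
    (integrableOn_abramowitzIntegrand hz _) (tendsto_abramowitzIntegrand_nhdsGT_zero hz _)
  rw [integral_add hsub (hint _ _), integral_sub (hint _ _) (hint _ _), integral_const_mul,
    integral_const_mul, integral_const_mul, ← abramowitzJ_eq_integral, ← abramowitzJ_eq_integral,
    ← abramowitzJ_eq_integral] at hzero
  linear_combination -hzero
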